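/- arXiv:2503.12561 — 4 statements merged into one kernel-verified Lean document; each statement's English description precedes it below -/
import Mathlib

section
/- For n ≥ 5 and any vertex v_j of the directed square cycle C_n², the number of directed spanning trees of C_n² rooted at v_j equals the Jacobsthal number J_n. -/
open Relation Finset

def jacobsthal : ℕ → ℕ
  | 0 => 0
  | 1 => 1
  | n + 2 => jacobsthal (n + 1) + 2 * jacobsthal n

/-- The symmetric (underlying undirected) reachability of a directed edge set is total. -/
def weaklyConnected {V : Type*} (E : Set (V × V)) : Prop :=
  ∀ u v : V, Relation.ReflTransGen (fun a b => (a, b) ∈ E ∨ (b, a) ∈ E) u v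

/-- One directed step along an edge set. -/
def dstep {V : Type*} (E : Set (V × V)) (a b : V) : Prop := (a, b) ∈ E

/-- Directed spanning tree of the digraph with edge set `Amb`, rooted at `u`. -/
def IsDirSpanningTree {V : Type*} (Amb : Set (V × V)) (u : V) (E : Set (V × V)) : Prop :=
  E ⊆ Amb ∧ weaklyConnected E ∧
    (∀ v : V, ¬ Relation.TransGen (dstep E) v v) ∧
    (∀ v : V, v ≠ u → ∃! w : V, (w, v) ∈ E) ∧
    (∀ v : V, v ≠ u → Relation.ReflTransGen (dstep E) u v)

/-- Directed strip graph on `m` vertices (vertex `i+1` of the paper is `i : Fin m`). -/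
def stripEdges (m : ℕ) : Set (Fin m × Fin m) :=
  {p | p.2.val = p.1.val + 1 ∨ p.2.val = p.1.val + 2}

/-- Directed spanning tree of the strip graph rooted at its first vertex. -/
def IsStripTree (m : ℕ) (E : Set (Fin m × Fin m)) : Prop :=
  E ⊆ stripEdges m ∧ weaklyConnected E ∧
    (∀ v, ¬ Relation.TransGen (dstep E) v v) ∧
    (∀ v : Fin m, v.val ≠ 0 → ∃! w : Fin m, (w, v) ∈ E) ∧
    (∀ v : Fin m, v.val ≠ 0 → ∃ u : Fin m, u.val = 0 ∧ Relation.ReflTransGen (dstep E) u v)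

/-- `t(S_m, 1)`: number of directed spanning trees of the strip graph rooted at vertex 1. -/
noncomputable def tStrip (m : ℕ) : ℕ := Set.ncard {E : Set (Fin m × Fin m) | IsStripTree m E}

def frame (n : ℕ) (i : ℤ) : ZMod n × ZMod n := ((i : ZMod n), ((i + 1 : ℤ) : ZMod n))

def window (n : ℕ) (i : ℤ) : ZMod n × ZMod n := ((i : ZMod n), ((i + 2 : ℤ) : ZMod n))

/-- Edge set of the directed square cycle. -/
def sqCycleEdges (n : ℕ) : Set (ZMod n × ZMod n) :=
  {p | ∃ i : ℤ, p = frame n i ∨ p = window n i}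

def windowsSet (n : ℕ) : Set (ZMod n × ZMod n) := {p | ∃ i : ℤ, p = window n i}

def triangleEdges (n : ℕ) (i : ℤ) : Set (ZMod n × ZMod n) :=
  {frame n i, frame n (i + 1), window n i}

def IsClosedSub (n : ℕ) (E : Set (ZMod n × ZMod n)) : Prop :=
  ∀ i : ℤ, (triangleEdges n i ∩ E).Subsingleton ∨ triangleEdges n i ⊆ E

/-- Weakly connected spanning closed subgraph of the square cycle. -/
def IsWCSC (n : ℕ) (E : Set (ZMod n × ZMod n)) : Prop :=
  E ⊆ sqCycleEdges n ∧ weaklyConnected E ∧ IsClosedSub n E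

/-- A spanning subgraph is nontrivial if it is neither the whole square cycle
nor the all-windows subgraph. -/
def NontrivialSub (n : ℕ) (E : Set (ZMod n × ZMod n)) : Prop :=
  E ≠ sqCycleEdges n ∧ E ≠ windowsSet n

def escapeRoute (n : ℕ) (k j : ℤ) : Set (ZMod n × ZMod n) :=
  {window n (j - 2), window n (j + 2 * k - 1)} ∪
    {p | ∃ i : ℤ, j - 1 ≤ i ∧ i ≤ j + 2 * k - 1 ∧ p = frame n i}

/-- Edge set of the directed strip graph with tails `S_{n,k,j}`. -/
def stripTailEdges (n : ℕ) (k j : ℤ) : Set (ZMod n × ZMod n) :=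
  sqCycleEdges n \ escapeRoute n k j

set_option linter.unusedSectionVars false

def pgood : List Bool → Prop
  | [] => True
  | [b] => b = true
  | b :: c :: t => if b then pgood (c :: t) else pgood t

def edgesOf (n : ℕ) (r : ZMod n) (l : List Bool) : Set (ZMod n × ZMod n) :=
  {e | ∃ d : ℕ, 1 ≤ d ∧ d ≤ l.length ∧
    e = ((r + (d : ZMod n)) - (if l.getD (l.length - d) true then 1 else 2), r + (d : ZMod n))}

lemma mem_sq (n : ℕ) (hn : 5 ≤ n) (a b : ZMod n) :
    (a, b) ∈ sqCycleEdges n ↔ b = a + 1 ∨ b = a + 2 := by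
  haveI : NeZero n := ⟨by omega⟩
  constructor
  · rintro ⟨i, h | h⟩
    · left; simp only [frame, Prod.mk.injEq] at h
      obtain ⟨h1, h2⟩ := h; subst h1; rw [h2]; push_cast; ring
    · right; simp only [window, Prod.mk.injEq] at h
      obtain ⟨h1, h2⟩ := h; subst h1; rw [h2]; push_cast; ring
  · have ha : ((a.val : ℤ) : ZMod n) = a := by
      push_cast; exact ZMod.natCast_rightInverse a
    rintro (h | h)
    · exact ⟨a.val, Or.inl (by simp only [frame, Prod.mk.injEq]; refine ⟨ha.symm, ?_⟩; rw [h]; push_cast [ha]; ring)⟩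
    · exact ⟨a.val, Or.inr (by simp only [window, Prod.mk.injEq]; refine ⟨ha.symm, ?_⟩; rw [h]; push_cast [ha]; ring)⟩

lemma castInj (n : ℕ) {d e : ℕ} (hd : d < n) (he : e < n) (h : (d : ZMod n) = e) : d = e := by
  have := congrArg ZMod.val h
  rwa [ZMod.val_cast_of_lt hd, ZMod.val_cast_of_lt he] at this

lemma pgood_cons_true {xs : List Bool} : pgood (true :: xs) ↔ pgood xs := by
  cases xs <;> simp [pgood]

section Main
variable {n : ℕ} (hn : 5 ≤ n) (r : ZMod n) {l : List Bool} (hl : l.length = n - 1)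

lemma cast_pred (hn : 5 ≤ n) : ((n - 1 : ℕ) : ZMod n) = -1 := by
  haveI : NeZero n := ⟨by omega⟩
  push_cast [Nat.cast_sub (by omega : 1 ≤ n)]
  simp [ZMod.natCast_self]

lemma edge_mem {d : ℕ} (h1 : 1 ≤ d) (h2 : d ≤ l.length) :
    ((r + (d : ZMod n)) - (if l.getD (l.length - d) true then 1 else 2), r + (d : ZMod n))
      ∈ edgesOf n r l := ⟨d, h1, h2, rfl⟩

include hn hl in
lemma parent_unique {a a' b : ZMod n} (h : (a, b) ∈ edgesOf n r l)
    (h' : (a', b) ∈ edgesOf n r l) : a = a' := by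
  obtain ⟨d, hd1, hd2, he⟩ := h
  obtain ⟨d', hd1', hd2', he'⟩ := h'
  simp only [Prod.mk.injEq] at he he'
  have : (d : ZMod n) = (d' : ZMod n) := by
    have := he.2.symm.trans he'.2
    exact add_left_cancel this
  have hdd : d = d' := castInj n (by omega) (by omega) this
  subst hdd
  rw [he.1, he'.1]

include hn hl in
lemma no_in_root {a : ZMod n} : (a, r) ∉ edgesOf n r l := by
  rintro ⟨d, hd1, hd2, he⟩
  simp only [Prod.mk.injEq] at he
  have : (d : ZMod n) = ((0 : ℕ) : ZMod n) := by
    have := he.2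
    simpa using congrArg (fun x => x - r) this.symm
  have := castInj n (by omega) (by omega) this
  omega

include hn in
lemma edges_subset : edgesOf n r l ⊆ sqCycleEdges n := by
  rintro ⟨a, b⟩ ⟨d, hd1, hd2, he⟩
  simp only [Prod.mk.injEq] at he
  rw [mem_sq n hn]
  rcases he with ⟨ha, hb⟩
  by_cases hc : l.getD (l.length - d) true
  · left; rw [ha, hb, if_pos hc]; ring
  · right; rw [ha, hb, if_neg hc]; ring

include hn hl in
lemma reach_descent : ∀ d : ℕ, d ≤ l.length →
    pgood (l.drop (l.length - d)) →
    ReflTransGen (dstep (edgesOf n r l)) r (r + (d : ZMod n)) := by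
  intro d
  induction d using Nat.strong_induction_on with
  | _ d IH =>
  intro hd hp
  match d, hd with
  | 0, _ => simpa using ReflTransGen.refl
  | (d+1), hd =>
    set k := l.length - (d+1) with hk
    have hklt : k < l.length := by omega
    rw [List.drop_eq_getElem_cons hklt] at hp
    have hget : l.getD k true = l[k] := List.getD_eq_getElem l true hklt
    by_cases hb : l[k] = true
    · rw [hb] at hp
      rw [pgood_cons_true] at hp
      have hstep := IH d (by omega) (by omega) (by rwa [show l.length - d = k + 1 by omega])
      refine hstep.tail ?_
      have := edge_mem r (show 1 ≤ d+1 by omega) hd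
      rw [← hk, hget, hb, if_pos rfl] at this
      have hcast : r + ((d+1 : ℕ) : ZMod n) - 1 = r + (d : ZMod n) := by push_cast; ring
      rwa [hcast] at this
    · rw [Bool.not_eq_true] at hb
      rw [hb] at hp
      rcases Nat.lt_or_ge d 1 with hd1 | hd1
      · -- d+1 = 1
        interval_cases d
        have : l.drop (k+1) = [] := by
          apply List.drop_eq_nil_of_le; omega
        rw [this] at hp
        simp [pgood] at hp
      · -- d+1 ≥ 2
        have hk1 : k + 1 < l.length := by omega
        rw [List.drop_eq_getElem_cons hk1] at hp
        have hp' : pgood (l.drop (k+2)) := by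
          simpa [pgood] using hp
        have hstep := IH (d-1) (by omega) (by omega)
          (by rwa [show l.length - (d-1) = k + 2 by omega])
        refine hstep.tail ?_
        have := edge_mem r (show 1 ≤ d+1 by omega) hd
        rw [← hk, hget, hb, if_neg (by simp)] at this
        have hcast : r + ((d+1 : ℕ) : ZMod n) - 2 = r + ((d-1 : ℕ) : ZMod n) := by
          push_cast [Nat.cast_sub hd1]; ring
        rwa [hcast] at this

end Main
section Main2
variable {n : ℕ} (hn : 5 ≤ n) (r : ZMod n) {l : List Bool} (hl : l.length = n - 1)

include hn hl in
lemma reach_all_idx (hp : pgood l) : ∀ d : ℕ, d ≤ l.length →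
    ReflTransGen (dstep (edgesOf n r l)) r (r + (d : ZMod n)) := by
  intro d
  induction d using Nat.strong_induction_on with
  | _ d IH =>
  intro hd
  match d, hd with
  | 0, _ => simpa using ReflTransGen.refl
  | (d+1), hd =>
    by_cases hb : l.getD (l.length - (d+1)) true = true
    · refine (IH d (by omega) (by omega)).tail ?_
      have := edge_mem r (show 1 ≤ d+1 by omega) hd
      rw [hb, if_pos rfl] at this
      have hcast : r + ((d+1 : ℕ) : ZMod n) - 1 = r + (d : ZMod n) := by push_cast; ring
      rwa [hcast] at this
    · rw [Bool.not_eq_true] at hb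
      rcases Nat.lt_or_ge d 1 with hd1 | hd1
      · -- d+1 = 1 : parent is r + (n-1)
        interval_cases d
        have htop := reach_descent hn r hl l.length le_rfl
          (by simpa using hp)
        refine htop.tail ?_
        have := edge_mem r (show 1 ≤ 1 by omega) (show 1 ≤ l.length by omega)
        rw [hb, if_neg (by simp)] at this
        have hcast : r + ((1 : ℕ) : ZMod n) - 2 = r + ((l.length : ℕ) : ZMod n) := by
          rw [hl, cast_pred hn]; push_cast; ring
        rwa [hcast] at this
      · refine (IH (d-1) (by omega) (by omega)).tail ?_
        have := edge_mem r (show 1 ≤ d+1 by omega) hd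
        rw [hb, if_neg (by simp)] at this
        have hcast : r + ((d+1 : ℕ) : ZMod n) - 2 = r + ((d-1 : ℕ) : ZMod n) := by
          push_cast [Nat.cast_sub hd1]; ring
        rwa [hcast] at this

include hn hl in
lemma reach_all (hp : pgood l) (v : ZMod n) :
    ReflTransGen (dstep (edgesOf n r l)) r v := by
  haveI : NeZero n := ⟨by omega⟩
  have h1 : (((v - r).val : ℕ) : ZMod n) = v - r := ZMod.natCast_rightInverse _
  have h2 : (v - r).val ≤ l.length := by
    have := ZMod.val_lt (v - r); omega
  have := reach_all_idx hn r hl hp (v - r).val h2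
  rwa [h1, show r + (v - r) = v by ring] at this

include hn hl in
lemma indeg (v : ZMod n) (hv : v ≠ r) : ∃! w : ZMod n, (w, v) ∈ edgesOf n r l := by
  haveI : NeZero n := ⟨by omega⟩
  set d := (v - r).val with hd
  have h1 : (((v - r).val : ℕ) : ZMod n) = v - r := ZMod.natCast_rightInverse _
  have hd1 : 1 ≤ d := by
    rcases Nat.eq_zero_or_pos d with h | h
    · exfalso
      apply hv
      have : v - r = 0 := by rw [← h1, ← hd, h]; simp
      have := sub_eq_zero.mp this; exact this
    · exact h
  have hd2 : d ≤ l.length := by have := ZMod.val_lt (v - r); omega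
  have hv' : v = r + (d : ZMod n) := by rw [h1]; ring
  refine ⟨(r + (d : ZMod n)) - (if l.getD (l.length - d) true then 1 else 2), ?_, ?_⟩
  · rw [hv']; exact edge_mem r hd1 hd2
  · intro w hw
    rw [hv'] at hw
    exact parent_unique hn r hl hw (edge_mem r hd1 hd2)

lemma acc_no_cycle {α : Type*} {R : α → α → Prop} {a : α} (h : Acc R a) : ¬ R a a := by
  induction h with
  | intro x _ ih => exact fun h' => ih x h' h'

include hn hl in
lemma acyclic (hp : pgood l) (v : ZMod n) :
    ¬ Relation.TransGen (dstep (edgesOf n r l)) v v := by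
  have hacc : ∀ w : ZMod n, ReflTransGen (dstep (edgesOf n r l)) r w →
      Acc (dstep (edgesOf n r l)) w := by
    intro w hw
    induction hw with
    | refl =>
      constructor; intro y hy
      exact absurd hy (no_in_root hn r hl)
    | tail hab e ih =>
      constructor; intro y hy
      rwa [parent_unique hn r hl hy e]
  have := (hacc v (reach_all hn r hl hp v)).transGen
  exact acc_no_cycle this

include hn hl in
lemma weakly_conn (hp : pgood l) : weaklyConnected (edgesOf n r l) := by
  intro u v
  have hsym : Symmetric (fun a b : ZMod n => (a, b) ∈ edgesOf n r l ∨ (b, a) ∈ edgesOf n r l) :=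
    fun a b h => h.symm
  have hru : ReflTransGen (fun a b : ZMod n => (a, b) ∈ edgesOf n r l ∨ (b, a) ∈ edgesOf n r l) r u :=
    ReflTransGen.mono (fun a b h => Or.inl h) _ _ (reach_all hn r hl hp u)
  have hrv : ReflTransGen (fun a b : ZMod n => (a, b) ∈ edgesOf n r l ∨ (b, a) ∈ edgesOf n r l) r v :=
    ReflTransGen.mono (fun a b h => Or.inl h) _ _ (reach_all hn r hl hp v)
  exact ((@ReflTransGen.stdSymm _ _ ⟨fun a b h => hsym h⟩).symm _ _ hru).trans hrv

include hn hl in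
lemma edgesOf_tree (hp : pgood l) :
    IsDirSpanningTree (sqCycleEdges n) r (edgesOf n r l) :=
  ⟨edges_subset hn r, weakly_conn hn r hl hp, acyclic hn r hl hp,
    fun v hv => indeg hn r hl v hv, fun v _ => reach_all hn r hl hp v⟩

end Main2
section Main3
variable {n : ℕ} (hn : 5 ≤ n) (r : ZMod n) {l : List Bool} (hl : l.length = n - 1)

include hn in
lemma one_ne_two : (1 : ZMod n) ≠ 2 := by
  intro h
  have h' : ((1 : ℕ) : ZMod n) = ((2 : ℕ) : ZMod n) := by push_cast; exact h
  have := castInj n (by omega) (by omega) h'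
  omega

omit hl in
include hn in
lemma bad_descent : ∀ d : ℕ, 1 ≤ d → d ≤ l.length →
    ¬ pgood (l.drop (l.length - d)) →
    l.getD (l.length - 1) true = false ∧
      ReflTransGen (dstep (edgesOf n r l)) (r + 1) (r + (d : ZMod n)) := by
  intro d
  induction d using Nat.strong_induction_on with
  | _ d IH =>
  intro hd1 hd hp
  set k := l.length - d with hk
  have hklt : k < l.length := by omega
  rw [List.drop_eq_getElem_cons hklt] at hp
  have hget : l.getD k true = l[k] := List.getD_eq_getElem l true hklt
  rcases Nat.lt_or_ge d 2 with hd2 | hd2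
  · -- d = 1
    interval_cases d
    have hnil : l.drop (k+1) = [] := List.drop_eq_nil_of_le (by omega)
    rw [hnil] at hp
    have hb : l[k] = false := by
      cases hb : l[k]
      · rfl
      · rw [hb] at hp; simp [pgood] at hp
    constructor
    · rw [show l.length - 1 = k by omega, hget, hb]
    · have : r + ((1 : ℕ) : ZMod n) = r + 1 := by push_cast; ring
      rw [this]
  · by_cases hb : l[k] = true
    · rw [hb, pgood_cons_true] at hp
      obtain ⟨hout, hpath⟩ := IH (d-1) (by omega) (by omega) (by omega)
        (by rwa [show l.length - (d-1) = k + 1 by omega])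
      refine ⟨hout, hpath.tail ?_⟩
      have := edge_mem r hd1 hd
      rw [← hk, hget, hb, if_pos rfl] at this
      have hcast : r + ((d : ℕ) : ZMod n) - 1 = r + ((d-1 : ℕ) : ZMod n) := by
        push_cast [Nat.cast_sub (show 1 ≤ d by omega)]; ring
      rwa [hcast] at this
    · rw [Bool.not_eq_true] at hb
      rw [hb] at hp
      have hk1 : k + 1 < l.length := by omega
      rw [List.drop_eq_getElem_cons hk1] at hp
      have hp' : ¬ pgood (l.drop (k+2)) := by
        intro h; apply hp; simpa [pgood] using h
      rcases Nat.lt_or_ge d 3 with hd3 | hd3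
      · -- d = 2 : drop (k+2) = [] has pgood, contradiction
        interval_cases d
        exfalso
        apply hp'
        rw [List.drop_eq_nil_of_le (by omega)]
        trivial
      · obtain ⟨hout, hpath⟩ := IH (d-2) (by omega) (by omega) (by omega)
          (by rwa [show l.length - (d-2) = k + 2 by omega])
        refine ⟨hout, hpath.tail ?_⟩
        have := edge_mem r hd1 hd
        rw [← hk, hget, hb, if_neg (by simp)] at this
        have hcast : r + ((d : ℕ) : ZMod n) - 2 = r + ((d-2 : ℕ) : ZMod n) := by
          push_cast [Nat.cast_sub (show 2 ≤ d by omega)]; ring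
        rwa [hcast] at this

include hn in
lemma tree_exists_list {E : Set (ZMod n × ZMod n)}
    (hT : IsDirSpanningTree (sqCycleEdges n) r E) :
    ∃ l : List Bool, l.length = n - 1 ∧ pgood l ∧ E = edgesOf n r l := by
  classical
  haveI : NeZero n := ⟨by omega⟩
  obtain ⟨hsub, hconn, hacyc, hindeg, hreach⟩ := hT
  -- no in-edge at the root
  have hnoin : ∀ a : ZMod n, (a, r) ∉ E := by
    intro a ha
    rcases eq_or_ne a r with rfl | hne
    · exact hacyc a (TransGen.single ha)
    · exact hacyc r (TransGen.trans_right (hreach a hne) (TransGen.single ha))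
  set l : List Bool := List.ofFn (fun i : Fin (n-1) =>
    if (r + ((n-1-(i:ℕ) : ℕ) : ZMod n) - 1, r + ((n-1-(i:ℕ) : ℕ) : ZMod n)) ∈ E
      then true else false) with hldef
  have hlen : l.length = n - 1 := by rw [hldef]; simp
  have hgetD0 : ∀ (i : ℕ), i < n - 1 →
      l.getD i true =
        (if (r + ((n-1-i : ℕ) : ZMod n) - 1, r + ((n-1-i : ℕ) : ZMod n)) ∈ E
          then true else false) := by
    intro i h
    rw [hldef]
    rw [List.getD_eq_getElem _ true (by simpa using h), List.getElem_ofFn]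
  have hgetD : ∀ d : ℕ, 1 ≤ d → d ≤ n - 1 →
      l.getD (l.length - d) true =
        (if (r + (d : ZMod n) - 1, r + (d : ZMod n)) ∈ E then true else false) := by
    intro d h1 h2
    rw [hlen, hgetD0 (n - 1 - d) (by omega), show n - 1 - (n - 1 - d) = d from by omega]
  -- characterize edges of E
  have hchar : ∀ a b : ZMod n, (a, b) ∈ E → b ≠ r ∧ (a = b - 1 ∨ a = b - 2) := by
    intro a b hab
    refine ⟨fun h => hnoin a (h ▸ hab), ?_⟩
    rcases (mem_sq n hn a b).mp (hsub hab) with h | h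
    · left; rw [h]; ring
    · right; rw [h]; ring
  have hEeq : E = edgesOf n r l := by
    ext ⟨a, b⟩
    constructor
    · intro hab
      obtain ⟨hbr, hpar⟩ := hchar a b hab
      set d := (b - r).val with hd
      have h1 : ((d : ℕ) : ZMod n) = b - r := ZMod.natCast_rightInverse _
      have hd1 : 1 ≤ d := by
        rcases Nat.eq_zero_or_pos d with h | h
        · exfalso; apply hbr
          have : b - r = 0 := by rw [← h1, h]; simp
          exact sub_eq_zero.mp this
        · exact h
      have hd2 : d ≤ n - 1 := by have := ZMod.val_lt (b - r); omega
      have hb' : b = r + (d : ZMod n) := by rw [h1]; ring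
      refine ⟨d, hd1, by omega, ?_⟩
      rcases hpar with h | h
      · have hmem : (r + (d : ZMod n) - 1, r + (d : ZMod n)) ∈ E := by
          rw [← hb', ← h]; exact hab
        rw [hgetD d hd1 hd2, if_pos hmem, if_pos rfl, h, hb']
      · have hne : (r + (d : ZMod n) - 1, r + (d : ZMod n)) ∉ E := by
          intro hmem
          rw [← hb'] at hmem
          have heq := (hindeg b hbr).unique hmem (h ▸ hab)
          exact one_ne_two hn (sub_right_inj.mp heq)
        rw [hgetD d hd1 hd2, if_neg hne, if_neg (by simp), h, hb']
    · rintro ⟨d, hd1, hd2, he⟩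
      rw [hlen] at hd2
      have hbr : r + (d : ZMod n) ≠ r := by
        intro h
        have : ((d : ℕ) : ZMod n) = ((0 : ℕ) : ZMod n) := by
          simpa using congrArg (fun x => x - r) h
        have := castInj n (by omega) (by omega) this
        omega
      rw [hgetD d hd1 hd2] at he
      by_cases hmem : (r + (d : ZMod n) - 1, r + (d : ZMod n)) ∈ E
      · rw [if_pos hmem] at he
        rw [he]; exact hmem
      · rw [if_neg hmem] at he
        -- the unique parent must be  - 2
        obtain ⟨w, hw, _⟩ := hindeg (r + (d : ZMod n)) hbr
        rcases (hchar w _ hw).2 with h | h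
        · exfalso; apply hmem
          have : w = r + (d : ZMod n) - 1 := by rw [h]
          rwa [this] at hw
        · rw [he]
          have : w = r + (d : ZMod n) - 2 := by rw [h]
          rwa [this] at hw
  refine ⟨l, hlen, ?_, hEeq⟩
  by_contra hbad
  have h0 : ¬ pgood (l.drop (l.length - l.length)) := by
    simpa using hbad
  obtain ⟨hout, hpath⟩ := bad_descent hn r l.length (by omega) le_rfl h0
  -- wrap edge
  have hedge : (r + ((1:ℕ) : ZMod n) - 2, r + ((1:ℕ) : ZMod n)) ∈ edgesOf n r l := by
    have := edge_mem r (show 1 ≤ 1 by omega) (show 1 ≤ l.length by omega)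
    rwa [hout, if_neg (by simp)] at this
  have htop : r + ((l.length : ℕ) : ZMod n) = r + ((1:ℕ) : ZMod n) - 2 := by
    rw [hlen, cast_pred hn]; push_cast; ring
  rw [htop] at hpath
  have hpath' : ReflTransGen (dstep (edgesOf n r l)) (r + ((1:ℕ):ZMod n)) (r + ((1:ℕ) : ZMod n) - 2) := by
    have : r + 1 = r + ((1:ℕ) : ZMod n) := by push_cast; ring
    rwa [this] at hpath
  have hcyc : TransGen (dstep (edgesOf n r l)) (r + ((1:ℕ):ZMod n)) (r + ((1:ℕ):ZMod n)) :=
    TransGen.trans_right hpath' (TransGen.single hedge)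
  rw [← hEeq] at hcyc
  exact hacyc _ hcyc

end Main3

def treeLists : ℕ → Finset (List Bool)
  | 0 => {[]}
  | 1 => {[true]}
  | (m+2) => ((treeLists (m+1)).image (List.cons true)) ∪
      (((treeLists m).image (fun t => false :: true :: t)) ∪
        ((treeLists m).image (fun t => false :: false :: t)))

lemma mem_treeLists : ∀ (m : ℕ) (l : List Bool),
    l ∈ treeLists m ↔ (l.length = m ∧ pgood l) := by
  intro m
  induction m using Nat.strong_induction_on with
  | _ m IH =>
  intro l
  match m with
  | 0 =>
    simp only [treeLists, Finset.mem_singleton]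
    constructor
    · rintro rfl; exact ⟨rfl, trivial⟩
    · rintro ⟨h, _⟩; exact List.eq_nil_of_length_eq_zero h
  | 1 =>
    simp only [treeLists, Finset.mem_singleton]
    constructor
    · rintro rfl; exact ⟨rfl, rfl⟩
    · rintro ⟨h, hp⟩
      match l, h with
      | [b], _ =>
        have : b = true := hp
        rw [this]
  | (m+2) =>
    simp only [treeLists, Finset.mem_union, Finset.mem_image]
    constructor
    · rintro ((⟨t, ht, rfl⟩) | (⟨t, ht, rfl⟩) | (⟨t, ht, rfl⟩))
      · obtain ⟨hlen, hp⟩ := (IH (m+1) (by omega) t).mp ht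
        refine ⟨by simp [hlen], ?_⟩
        rwa [pgood_cons_true]
      · obtain ⟨hlen, hp⟩ := (IH m (by omega) t).mp ht
        exact ⟨by simp [hlen], by simpa [pgood] using hp⟩
      · obtain ⟨hlen, hp⟩ := (IH m (by omega) t).mp ht
        exact ⟨by simp [hlen], by simpa [pgood] using hp⟩
    · rintro ⟨hlen, hp⟩
      match l, hlen with
      | a :: b :: t, hlen =>
        have hlt : t.length = m := by simpa using hlen
        cases a
        · right
          have hpt : pgood t := by simpa [pgood] using hp
          cases b
          · right; exact ⟨t, (IH m (by omega) t).mpr ⟨hlt, hpt⟩, rfl⟩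
          · left; exact ⟨t, (IH m (by omega) t).mpr ⟨hlt, hpt⟩, rfl⟩
        · left
          have hpt : pgood (b :: t) := by simpa [pgood] using hp
          exact ⟨b :: t, (IH (m+1) (by omega) (b :: t)).mpr ⟨by simp [hlt], hpt⟩, rfl⟩

lemma card_treeLists : ∀ m : ℕ, (treeLists m).card = jacobsthal (m+1) := by
  intro m
  induction m using Nat.strong_induction_on with
  | _ m IH =>
  match m with
  | 0 => simp [treeLists, jacobsthal]
  | 1 => simp [treeLists, jacobsthal]
  | (m+2) =>
    have hinj1 : Function.Injective (List.cons true : List Bool → List Bool) :=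
      fun a b h => by simpa using h
    have hinj2 : Function.Injective (fun t : List Bool => false :: true :: t) :=
      fun a b h => by simpa using h
    have hinj3 : Function.Injective (fun t : List Bool => false :: false :: t) :=
      fun a b h => by simpa using h
    have hd23 : Disjoint ((treeLists m).image (fun t => false :: true :: t))
        ((treeLists m).image (fun t => false :: false :: t)) := by
      rw [Finset.disjoint_left]
      rintro a ha hb
      simp only [Finset.mem_image] at ha hb
      obtain ⟨t, _, rfl⟩ := ha
      obtain ⟨t', _, h⟩ := hb
      simp at h
    have hd123 : Disjoint ((treeLists (m+1)).image (List.cons true))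
        (((treeLists m).image (fun t => false :: true :: t)) ∪
          ((treeLists m).image (fun t => false :: false :: t))) := by
      rw [Finset.disjoint_left]
      rintro a ha hb
      simp only [Finset.mem_union, Finset.mem_image] at ha hb
      obtain ⟨t, _, rfl⟩ := ha
      rcases hb with ⟨t', _, h⟩ | ⟨t', _, h⟩ <;> simp at h
    rw [treeLists]
    rw [Finset.card_union_of_disjoint hd123, Finset.card_union_of_disjoint hd23,
      Finset.card_image_of_injective _ hinj1, Finset.card_image_of_injective _ hinj2,
      Finset.card_image_of_injective _ hinj3,
      IH (m+1) (by omega), IH m (by omega)]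
    show jacobsthal (m+2) + (jacobsthal (m+1) + jacobsthal (m+1)) = jacobsthal (m+3)
    show _ = jacobsthal (m+2) + 2 * jacobsthal (m+1)
    ring
section Final
variable {n : ℕ}

lemma edgesOf_injOn (hn : 5 ≤ n) (r : ZMod n) {l l' : List Bool}
    (hl : l.length = n - 1) (hl' : l'.length = n - 1)
    (h : edgesOf n r l = edgesOf n r l') : l = l' := by
  apply List.ext_getElem (by omega)
  intro i hi hi'
  have hd1 : 1 ≤ n - 1 - i := by omega
  have hd2 : n - 1 - i ≤ l.length := by omega
  have hidx : l.length - (n - 1 - i) = i := by omega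
  have hidx' : l'.length - (n - 1 - i) = i := by omega
  have e1 := edge_mem r hd1 hd2
  rw [h] at e1
  have e2 := edge_mem r hd1 (show n - 1 - i ≤ l'.length by omega)
  have := parent_unique hn r hl' e1 e2
  have hc : (if l.getD (l.length - (n-1-i)) true then (1 : ZMod n) else 2)
      = (if l'.getD (l'.length - (n-1-i)) true then 1 else 2) := sub_right_inj.mp this
  rw [hidx, hidx'] at hc
  rw [List.getD_eq_getElem l true (by omega), List.getD_eq_getElem l' true (by omega)] at hc
  cases hb : l[i] <;> cases hb' : l'[i] <;> rw [hb, hb'] at hc <;> simp at hc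
  · exact absurd hc.symm (one_ne_two hn)
  · exact absurd hc (one_ne_two hn)


theorem sqCycle_tree_count (n : ℕ) (hn : 5 ≤ n) (j : ℤ) :
    Set.ncard {E : Set (ZMod n × ZMod n) |
        IsDirSpanningTree (sqCycleEdges n) ((j : ZMod n)) E} = jacobsthal n := by
  set r := (j : ZMod n) with hr
  have hset : {E : Set (ZMod n × ZMod n) | IsDirSpanningTree (sqCycleEdges n) r E}
      = (edgesOf n r) '' ↑(treeLists (n-1)) := by
    ext E
    simp only [Set.mem_setOf_eq, Set.mem_image, Finset.mem_coe]
    constructor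
    · intro hT
      obtain ⟨l, hlen, hp, hEeq⟩ := tree_exists_list hn r hT
      exact ⟨l, (mem_treeLists _ l).mpr ⟨hlen, hp⟩, hEeq.symm⟩
    · rintro ⟨l, hl, rfl⟩
      obtain ⟨hlen, hp⟩ := (mem_treeLists _ l).mp hl
      exact edgesOf_tree hn r hlen hp
  have hinj : Set.InjOn (edgesOf n r) ↑(treeLists (n-1)) := by
    intro l hl l' hl' h
    obtain ⟨hlen, _⟩ := (mem_treeLists _ l).mp hl
    obtain ⟨hlen', _⟩ := (mem_treeLists _ l').mp hl'
    exact edgesOf_injOn hn r hlen hlen' h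
  rw [hset, Set.ncard_image_of_injOn hinj, Set.ncard_coe_finset, card_treeLists,
    show n - 1 + 1 = n from by omega]

end Final
end

section
/- Let n ≥ 5 and let j, k, j', k' be integers with 0 ≤ k, k' ≤ ⌈(n−2)/2⌉ and 0 ≤ j, j' ≤ n−1. If E(S_{n,k,j}) ⊆ E(S_{n,k',j'}), then (j, k) = (j', k'). -/
open Relation Finset

lemma int_dvd_zero {n : ℕ} {d : ℤ} (h : (n:ℤ) ∣ d) (h1 : -(n:ℤ) < d) (h2 : d < n) : d = 0 :=
  Int.eq_zero_of_abs_lt_dvd h (abs_lt.mpr ⟨h1, h2⟩)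

lemma window_inj {n : ℕ} {a b : ℤ} (h : window n a = window n b) : (n:ℤ) ∣ (a - b) := by
  have h1 : ((a:ℤ) : ZMod n) = ((b:ℤ) : ZMod n) := congrArg Prod.fst h
  rw [ZMod.intCast_eq_intCast_iff] at h1
  exact h1.symm.dvd

lemma frame_inj {n : ℕ} {a b : ℤ} (h : frame n a = frame n b) : (n:ℤ) ∣ (a - b) := by
  have h1 : ((a:ℤ) : ZMod n) = ((b:ℤ) : ZMod n) := congrArg Prod.fst h
  rw [ZMod.intCast_eq_intCast_iff] at h1
  exact h1.symm.dvd

lemma frame_ne_window {n : ℕ} (hn : 5 ≤ n) {a b : ℤ} : frame n a ≠ window n b := by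
  intro h
  have h1 : ((a:ℤ) : ZMod n) = ((b:ℤ) : ZMod n) := congrArg Prod.fst h
  have h2 : ((a + 1 : ℤ) : ZMod n) = ((b + 2 : ℤ) : ZMod n) := congrArg Prod.snd h
  rw [ZMod.intCast_eq_intCast_iff] at h1 h2
  have h3 : (1 : ℤ) ≡ 2 [ZMOD (n:ℤ)] := by
    have := h2.sub h1; simpa using this
  have h4 : (n:ℤ) ∣ 1 := h3.dvd
  have := Int.le_of_dvd (by norm_num) h4
  omega

lemma window_mem_ER {n : ℕ} (hn : 5 ≤ n) {k j a : ℤ}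
    (h : window n a ∈ escapeRoute n k j) :
    (n:ℤ) ∣ (a - (j - 2)) ∨ (n:ℤ) ∣ (a - (j + 2 * k - 1)) := by
  rcases h with h | ⟨i, _, _, h⟩
  · rcases h with h | h
    · exact Or.inl (window_inj h)
    · exact Or.inr (window_inj h)
  · exact absurd h.symm (frame_ne_window hn)

lemma frame_mem_ER {n : ℕ} (hn : 5 ≤ n) {k j a : ℤ}
    (h : frame n a ∈ escapeRoute n k j) :
    ∃ i : ℤ, j - 1 ≤ i ∧ i ≤ j + 2 * k - 1 ∧ (n:ℤ) ∣ (a - i) := by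
  rcases h with h | ⟨i, h1, h2, h⟩
  · rcases h with h | h <;> exact absurd h (frame_ne_window hn)
  · exact ⟨i, h1, h2, frame_inj h⟩

theorem stripTail_subset_eq (n : ℕ) (hn : 5 ≤ n) (j k j' k' : ℕ)
    (hk : k ≤ (n - 1) / 2) (hk' : k' ≤ (n - 1) / 2)
    (hj : j ≤ n - 1) (hj' : j' ≤ n - 1)
    (hsub : stripTailEdges n (k : ℤ) (j : ℤ) ⊆ stripTailEdges n (k' : ℤ) (j' : ℤ)) :
    (j, k) = (j', k') := by
  -- complementation: escapeRoute (k',j') ⊆ escapeRoute (k,j) on the square cycle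
  have key : ∀ p ∈ escapeRoute n (k':ℤ) (j':ℤ), p ∈ sqCycleEdges n →
      p ∈ escapeRoute n (k:ℤ) (j:ℤ) := by
    intro p hp hcyc
    by_contra hne
    exact (hsub ⟨hcyc, hne⟩).2 hp
  -- memberships of windows / frames of the (k',j') escape route
  have w1 : window n ((j':ℤ) - 2) ∈ escapeRoute n (k:ℤ) (j:ℤ) :=
    key _ (Or.inl (Or.inl rfl)) ⟨(j':ℤ) - 2, Or.inr rfl⟩
  have w2 : window n ((j':ℤ) + 2 * (k':ℤ) - 1) ∈ escapeRoute n (k:ℤ) (j:ℤ) :=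
    key _ (Or.inl (Or.inr rfl)) ⟨(j':ℤ) + 2 * (k':ℤ) - 1, Or.inr rfl⟩
  have f1 : frame n ((j':ℤ) - 1) ∈ escapeRoute n (k:ℤ) (j:ℤ) :=
    key _ (Or.inr ⟨(j':ℤ) - 1, le_refl _, by omega, rfl⟩) ⟨(j':ℤ) - 1, Or.inl rfl⟩
  have f2 : frame n ((j':ℤ) + 2 * (k':ℤ) - 1) ∈ escapeRoute n (k:ℤ) (j:ℤ) :=
    key _ (Or.inr ⟨(j':ℤ) + 2 * (k':ℤ) - 1, by omega, le_refl _, rfl⟩)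
      ⟨(j':ℤ) + 2 * (k':ℤ) - 1, Or.inl rfl⟩
  have hA := window_mem_ER hn w1
  have hB := window_mem_ER hn w2
  obtain ⟨i1, hi1a, hi1b, hi1⟩ := frame_mem_ER hn f1
  obtain ⟨i2, hi2a, hi2b, hi2⟩ := frame_mem_ER hn f2
  -- bounds
  have hkb : 2 * (k:ℤ) ≤ (n:ℤ) - 1 := by omega
  have hkb' : 2 * (k':ℤ) ≤ (n:ℤ) - 1 := by omega
  have hjb : (j:ℤ) ≤ (n:ℤ) - 1 := by omega
  have hjb' : (j':ℤ) ≤ (n:ℤ) - 1 := by omega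
  have hj0 : (0:ℤ) ≤ (j:ℤ) := Int.natCast_nonneg j
  have hj0' : (0:ℤ) ≤ (j':ℤ) := Int.natCast_nonneg j'
  have hk0 : (0:ℤ) ≤ (k:ℤ) := Int.natCast_nonneg k
  have hk0' : (0:ℤ) ≤ (k':ℤ) := Int.natCast_nonneg k'
  have hn5 : (5:ℤ) ≤ (n:ℤ) := by omega
  -- Step 1: j = j'
  have hjeq : (j:ℤ) = (j':ℤ) := by
    rcases hA with hA | hA
    · have := int_dvd_zero hA (by omega) (by omega)
      omega
    · -- j' - 2 ≡ j + 2k - 1, i.e. n ∣ j' - j - 2k - 1 ; combine with frame f1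
      -- n ∣ (j' - 1 - i1) - (j' - j - 2k - 1) = j + 2k - i1 ∈ [1, 2k+1]
      have hd : (n:ℤ) ∣ ((j:ℤ) + 2 * k - i1) := by
        have := hi1.sub hA
        have he : ((j':ℤ) - 1 - i1) - ((j':ℤ) - 2 - ((j:ℤ) + 2 * k - 1)) = (j:ℤ) + 2*k - i1 := by ring
        rwa [he] at this
      have h1 : (1:ℤ) ≤ (j:ℤ) + 2 * k - i1 := by omega
      have h2 : (j:ℤ) + 2 * k - i1 ≤ 2 * k + 1 := by omega
      -- so d = n and 2k + 1 = n
      have hd0 : (j:ℤ) + 2 * k - i1 - n = 0 := by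
        refine int_dvd_zero (by exact (Int.dvd_sub hd (dvd_refl _))) (by omega) (by omega)
      have h2k : 2 * (k:ℤ) + 1 = (n:ℤ) := by omega
      -- then n ∣ j' - j
      have : (n:ℤ) ∣ ((j':ℤ) - (j:ℤ)) := by
        have := hA.add (dvd_refl (n:ℤ))
        have he : ((j':ℤ) - 2 - ((j:ℤ) + 2 * k - 1)) + (n:ℤ) = (j':ℤ) - (j:ℤ) := by omega
        rwa [he] at this
      have := int_dvd_zero this (by omega) (by omega)
      omega
  -- Step 2: k = k'
  have hkeq : (k:ℤ) = (k':ℤ) := by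
    rcases hB with hB | hB
    · -- n ∣ j' + 2k' - 1 - (j - 2) = 2k' + 1 (using j = j') ⇒ 2k' + 1 = n
      have hd : (n:ℤ) ∣ (2 * (k':ℤ) + 1) := by
        have he : ((j':ℤ) + 2 * k' - 1 - ((j:ℤ) - 2)) = 2 * (k':ℤ) + 1 := by omega
        rwa [he] at hB
      have hd0 : 2 * (k':ℤ) + 1 - n = 0 := by
        refine int_dvd_zero (Int.dvd_sub hd (dvd_refl _)) (by omega) (by omega)
      -- use frame f2 : n ∣ j' + 2k' - 1 - i2 = j + n - 2 - i2, i2 ∈ [j-1, j+2k-1]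
      have hd2 : (j':ℤ) + 2 * k' - 1 - i2 = 0 := by
        refine int_dvd_zero hi2 (by omega) (by omega)
      omega
    · have := int_dvd_zero hB (by omega) (by omega)
      omega
  simp only [Prod.mk.injEq]
  omega
end

section
/- For every integer n ≥ 3, every directed spanning tree rooted at vertex 1 of the directed strip graph S_n contains exactly one of the edges (n−2, n) and (n−1, n), and the trees containing (n−1, n) (respectively (n−2, n)) are in bijection with the directed spanning trees rooted at 1 of S_{n−1}. -/
open Relation Finset

namespace StripTreeAux

private lemma rtg_lift {α β : Type*} {r : α → α → Prop} {s : β → β → Prop} (f : α → β)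
    (hf : ∀ a b, r a b → Relation.ReflTransGen s (f a) (f b)) {x y : α}
    (h : Relation.ReflTransGen r x y) : Relation.ReflTransGen s (f x) (f y) := by
  induction h with
  | refl => exact .refl
  | tail _ h ih => exact ih.trans (hf _ _ h)

private lemma strip_lt {m : ℕ} {E : Set (Fin m × Fin m)} (hE : E ⊆ stripEdges m)
    {a b : Fin m} (h : (a, b) ∈ E) : a.val < b.val := by
  have h2 := hE h
  simp only [stripEdges, Set.mem_setOf_eq] at h2
  omega

private lemma strip_no_cycle {m : ℕ} {E : Set (Fin m × Fin m)} (hE : E ⊆ stripEdges m) :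
    ∀ v, ¬ Relation.TransGen (dstep E) v v := by
  have key : ∀ a b : Fin m, Relation.TransGen (dstep E) a b → a.val < b.val := by
    intro a b h
    induction h with
    | single h => exact strip_lt hE h
    | tail _ h ih => exact ih.trans (strip_lt hE h)
  exact fun v hv => lt_irrefl _ (key v v hv)

variable {n : ℕ}

def ι (x : Fin (n - 1)) : Fin n := Fin.castLE (Nat.sub_le n 1) x

lemma ι_inj : Function.Injective (ι (n := n)) := by
  intro a b h
  have h2 := congrArg Fin.val h
  exact Fin.ext h2

def dn (E : Set (Fin n × Fin n)) : Set (Fin (n - 1) × Fin (n - 1)) :=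
  {p | (ι p.1, ι p.2) ∈ E}

def lastV (hn : 3 ≤ n) : Fin n := ⟨n - 1, Nat.sub_lt (by omega) Nat.one_pos⟩

def up (hn : 3 ≤ n) (w : Fin n) (E' : Set (Fin (n - 1) × Fin (n - 1))) :
    Set (Fin n × Fin n) :=
  {q | (∃ p ∈ E', q = (ι p.1, ι p.2)) ∨ q = (w, lastV hn)}

lemma in_last (hn : 3 ≤ n) {E : Set (Fin n × Fin n)} {w : Fin n}
    (hE : IsStripTree n E) (hwE : (w, lastV hn) ∈ E)
    {x : Fin n} (hx : (x, lastV hn) ∈ E) : x = w := by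
  obtain ⟨u, _, hu⟩ := hE.2.2.2.1 (lastV hn) (show n - 1 ≠ 0 by omega)
  exact (hu x hx).trans (hu w hwE).symm

def proj (w : Fin n) (hw : w.val < n - 1) (x : Fin n) : Fin (n - 1) :=
  if h : x.val < n - 1 then ⟨x.val, h⟩ else ⟨w.val, hw⟩

lemma proj_ι (w : Fin n) (hw : w.val < n - 1) (u : Fin (n - 1)) : proj w hw (ι u) = u := by
  have h : (ι u : Fin n).val < n - 1 := u.isLt
  unfold proj
  rw [dif_pos h]
  rfl

lemma pi_step (hn : 3 ≤ n) {E : Set (Fin n × Fin n)} {w : Fin n}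
    (hE : IsStripTree n E) (hwE : (w, lastV hn) ∈ E) (hw : w.val < n - 1)
    {x y : Fin n} (h : (x, y) ∈ E) :
    Relation.ReflTransGen (dstep (dn E)) (proj w hw x) (proj w hw y) := by
  by_cases hy : y.val = n - 1
  · have hyl : y = lastV hn := Fin.ext hy
    have hx : x = w := in_last hn hE hwE (hyl ▸ h)
    have e1 : proj w hw x = ⟨w.val, hw⟩ := by
      subst hx; unfold proj; rw [dif_pos hw]
    have e2 : proj w hw y = ⟨w.val, hw⟩ := by
      unfold proj; rw [dif_neg (by omega)]
    rw [e1, e2]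
  · have hy' : y.val < n - 1 := by have := y.isLt; omega
    have hx' : x.val < n - 1 := lt_trans (strip_lt hE.1 h) hy'
    have e1 : proj w hw x = ⟨x.val, hx'⟩ := by unfold proj; rw [dif_pos hx']
    have e2 : proj w hw y = ⟨y.val, hy'⟩ := by unfold proj; rw [dif_pos hy']
    rw [e1, e2]
    exact Relation.ReflTransGen.single
      (show (ι (⟨x.val, hx'⟩ : Fin (n-1)), ι (⟨y.val, hy'⟩ : Fin (n-1))) ∈ E from h)

lemma down_tree (hn : 3 ≤ n) {E : Set (Fin n × Fin n)} {w : Fin n}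
    (hE : IsStripTree n E) (hwE : (w, lastV hn) ∈ E) (hw : w.val < n - 1) :
    IsStripTree (n - 1) (dn E) := by
  have hsub : dn E ⊆ stripEdges (n - 1) := by
    rintro ⟨a, b⟩ hab
    have h2 := hE.1 hab
    simp only [stripEdges, Set.mem_setOf_eq] at h2 ⊢
    exact h2
  refine ⟨hsub, ?_, strip_no_cycle hsub, ?_, ?_⟩
  · intro u v
    have hp := hE.2.1 (ι u) (ι v)
    have key : ∀ a b : Fin n, ((a, b) ∈ E ∨ (b, a) ∈ E) →
        Relation.ReflTransGen (fun a b => (a, b) ∈ dn E ∨ (b, a) ∈ dn E)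
          (proj w hw a) (proj w hw b) := by
      intro a b hab
      have conv : ∀ {c d : Fin (n-1)}, Relation.ReflTransGen (dstep (dn E)) c d →
          Relation.ReflTransGen (fun a b => (a, b) ∈ dn E ∨ (b, a) ∈ dn E) c d :=
        fun h => Relation.ReflTransGen.mono (fun _ _ hh => Or.inl hh) _ _ h
      rcases hab with hab | hab
      · exact conv (pi_step hn hE hwE hw hab)
      · exact (@Relation.ReflTransGen.stdSymm _ _ ⟨fun a b hh => hh.symm⟩).symm _ _
          (conv (pi_step hn hE hwE hw hab))
    have := rtg_lift (proj w hw) key hp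
    rwa [proj_ι, proj_ι] at this
  · intro v hv
    obtain ⟨u, hu, huniq⟩ := hE.2.2.2.1 (ι v) hv
    have hu' : u.val < n - 1 := lt_trans (strip_lt hE.1 hu) v.isLt
    refine ⟨⟨u.val, hu'⟩, ?_, ?_⟩
    · exact hu
    · intro y hy
      have h6 := huniq (ι y) hy
      exact Fin.ext (show y.val = u.val from congrArg Fin.val h6)
  · intro v hv
    obtain ⟨u, hu0, hpath⟩ := hE.2.2.2.2 (ι v) hv
    have hu' : u.val < n - 1 := by omega
    have e1 : proj w hw u = ⟨u.val, hu'⟩ := by unfold proj; rw [dif_pos hu']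
    refine ⟨proj w hw u, by rw [e1]; exact hu0, ?_⟩
    have := rtg_lift (proj w hw) (fun a b h => pi_step hn hE hwE hw h) hpath
    rwa [proj_ι] at this

lemma up_tree (hn : 3 ≤ n) (w : Fin n) (hw : w.val = n - 2 ∨ w.val = n - 3)
    {E' : Set (Fin (n - 1) × Fin (n - 1))} (hE' : IsStripTree (n - 1) E') :
    IsStripTree n (up hn w E') := by
  have hwlt : w.val < n - 1 := by omega
  have hsub : up hn w E' ⊆ stripEdges n := by
    intro q hq
    rcases hq with ⟨p, hp, heq⟩ | heq <;> subst heq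
    · have h2 := hE'.1 hp
      simp only [stripEdges, Set.mem_setOf_eq] at h2 ⊢
      exact h2
    · show (lastV hn).val = w.val + 1 ∨ (lastV hn).val = w.val + 2
      have hl : (lastV hn).val = n - 1 := rfl
      omega
  have lift1 : ∀ (a b : Fin (n - 1)), (a, b) ∈ E' → (ι a, ι b) ∈ up hn w E' :=
    fun a b h => Or.inl ⟨(a, b), h, rfl⟩
  refine ⟨hsub, ?_, strip_no_cycle hsub, ?_, ?_⟩
  · intro u v
    have hsymm : Symmetric (fun a b : Fin n => (a, b) ∈ up hn w E' ∨ (b, a) ∈ up hn w E') :=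
      fun a b h => h.symm
    have tol : ∀ x : Fin n,
        Relation.ReflTransGen (fun a b : Fin n => (a, b) ∈ up hn w E' ∨ (b, a) ∈ up hn w E')
          x (lastV hn) := by
      intro x
      by_cases hx : x.val < n - 1
      · have hpath := hE'.2.1 ⟨x.val, hx⟩ ⟨w.val, hwlt⟩
        have hstep : ∀ a b : Fin (n - 1), ((a, b) ∈ E' ∨ (b, a) ∈ E') →
            Relation.ReflTransGen
              (fun a b : Fin n => (a, b) ∈ up hn w E' ∨ (b, a) ∈ up hn w E') (ι a) (ι b) := by
          rintro a b (h | h)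
          · exact Relation.ReflTransGen.single (Or.inl (lift1 a b h))
          · exact Relation.ReflTransGen.single (Or.inr (lift1 b a h))
        have := rtg_lift ι hstep hpath
        exact this.tail (Or.inl (Or.inr rfl))
      · have hxl : x = lastV hn := Fin.ext (by have := x.isLt; show x.val = n - 1; omega)
        rw [hxl]
    exact (tol u).trans ((@Relation.ReflTransGen.stdSymm _ _ ⟨hsymm⟩).symm _ _ (tol v))
  · intro v hv
    by_cases hvl : v = lastV hn
    · subst hvl
      refine ⟨w, Or.inr rfl, ?_⟩
      rintro y (⟨p, hp, heq⟩ | heq)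
      · exfalso
        have h2 : (lastV hn).val = (ι p.2 : Fin n).val :=
          congrArg (fun q : Fin n × Fin n => q.2.val) heq
        have h3 : (n : ℕ) - 1 = p.2.val := h2
        have := p.2.isLt
        omega
      · exact congrArg Prod.fst heq
    · have hvlt : v.val < n - 1 := by
        have h1 := v.isLt
        have h2 : v.val ≠ n - 1 := fun h => hvl (Fin.ext h)
        omega
      obtain ⟨u, hu, huniq⟩ := hE'.2.2.2.1 ⟨v.val, hvlt⟩ hv
      refine ⟨ι u, Or.inl ⟨(u, ⟨v.val, hvlt⟩), hu, rfl⟩, ?_⟩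
      rintro y (⟨p, hp, heq⟩ | heq)
      · have e1 : y = ι p.1 := congrArg Prod.fst heq
        have e2 : v = ι p.2 := congrArg Prod.snd heq
        have hp2 : p.2 = ⟨v.val, hvlt⟩ :=
          Fin.ext (show p.2.val = v.val from (congrArg Fin.val e2).symm)
        have hp' : (p.1, p.2) ∈ E' := hp
        rw [hp2] at hp'
        rw [e1]
        exact congrArg ι (huniq p.1 hp')
      · exfalso
        exact hvl (congrArg Prod.snd heq)
  · intro v hv
    by_cases hvl : v = lastV hn
    · subst hvl
      by_cases hw0 : w.val = 0
      · exact ⟨w, hw0, Relation.ReflTransGen.single (Or.inr rfl)⟩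
      · obtain ⟨u, hu0, hpath⟩ := hE'.2.2.2.2 ⟨w.val, hwlt⟩ hw0
        have := rtg_lift ι
          (fun a b h => show Relation.ReflTransGen (dstep (up hn w E')) (ι a) (ι b) from
            Relation.ReflTransGen.single (lift1 a b h)) hpath
        exact ⟨ι u, hu0, this.tail (Or.inr rfl)⟩
    · have hvlt : v.val < n - 1 := by
        have h1 := v.isLt
        have h2 : v.val ≠ n - 1 := fun h => hvl (Fin.ext h)
        omega
      obtain ⟨u, hu0, hpath⟩ := hE'.2.2.2.2 ⟨v.val, hvlt⟩ hv
      have := rtg_lift ι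
        (fun a b h => show Relation.ReflTransGen (dstep (up hn w E')) (ι a) (ι b) from
          Relation.ReflTransGen.single (lift1 a b h)) hpath
      exact ⟨ι u, hu0, this⟩

lemma up_down (hn : 3 ≤ n) {E : Set (Fin n × Fin n)} {w : Fin n}
    (hE : IsStripTree n E) (hwE : (w, lastV hn) ∈ E) :
    up hn w (dn E) = E := by
  ext ⟨a, b⟩
  constructor
  · rintro (⟨⟨p1, p2⟩, hp, heq⟩ | heq)
    · rw [heq]; exact hp
    · rw [heq]; exact hwE
  · intro hab
    by_cases hb : b = lastV hn
    · subst hb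
      have hae : a = w := in_last hn hE hwE hab
      exact Or.inr (by rw [hae])
    · have hblt : b.val < n - 1 := by
        have h1 := b.isLt
        have h2 : b.val ≠ n - 1 := fun h => hb (Fin.ext h)
        omega
      have halt : a.val < n - 1 := lt_trans (strip_lt hE.1 hab) hblt
      exact Or.inl ⟨(⟨a.val, halt⟩, ⟨b.val, hblt⟩), hab, rfl⟩

lemma dn_up (hn : 3 ≤ n) (w : Fin n) (E' : Set (Fin (n - 1) × Fin (n - 1))) :
    dn (up hn w E') = E' := by
  ext ⟨a, b⟩
  constructor
  · rintro (⟨p, hp, heq⟩ | heq)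
    · have e1 : ι a = (ι p.1 : Fin n) := congrArg Prod.fst heq
      have e2 : ι b = (ι p.2 : Fin n) := congrArg Prod.snd heq
      rw [ι_inj e1, ι_inj e2]
      exact hp
    · have e2 : (ι b : Fin n) = lastV hn := congrArg Prod.snd heq
      have h3 : b.val = n - 1 := congrArg Fin.val e2
      have := b.isLt
      omega
  · intro h
    exact Or.inl ⟨(a, b), h, rfl⟩

lemma strip_equiv (hn : 3 ≤ n) (w : Fin n) (hw : w.val = n - 2 ∨ w.val = n - 3) :
    Nonempty ({E : Set (Fin n × Fin n) // IsStripTree n E ∧ (w, lastV hn) ∈ E} ≃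
      {E' : Set (Fin (n - 1) × Fin (n - 1)) // IsStripTree (n - 1) E'}) := by
  have hwlt : w.val < n - 1 := by omega
  refine ⟨⟨fun E => ⟨dn E.1, down_tree hn E.2.1 E.2.2 hwlt⟩,
      fun E' => ⟨up hn w E'.1, up_tree hn w hw E'.2, Or.inr rfl⟩, ?_, ?_⟩⟩
  · rintro ⟨E, hE, hwE⟩
    exact Subtype.ext (up_down hn hE hwE)
  · rintro ⟨E', hE'⟩
    exact Subtype.ext (dn_up hn w E')

end StripTreeAux

theorem strip_tree_last_edge (n : ℕ) (hn : 3 ≤ n) :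
    (∀ E : Set (Fin n × Fin n), IsStripTree n E →
      Xor' (((⟨n - 3, by omega⟩ : Fin n), (⟨n - 1, by omega⟩ : Fin n)) ∈ E)
        (((⟨n - 2, by omega⟩ : Fin n), (⟨n - 1, by omega⟩ : Fin n)) ∈ E)) ∧
    Nonempty
      ({E : Set (Fin n × Fin n) // IsStripTree n E ∧
          ((⟨n - 2, by omega⟩ : Fin n), (⟨n - 1, by omega⟩ : Fin n)) ∈ E} ≃
        {E' : Set (Fin (n - 1) × Fin (n - 1)) // IsStripTree (n - 1) E'}) ∧
    Nonempty
      ({E : Set (Fin n × Fin n) // IsStripTree n E ∧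
          ((⟨n - 3, by omega⟩ : Fin n), (⟨n - 1, by omega⟩ : Fin n)) ∈ E} ≃
        {E' : Set (Fin (n - 1) × Fin (n - 1)) // IsStripTree (n - 1) E'}) := by
  refine ⟨?_, ?_, ?_⟩
  · intro E hE
    obtain ⟨u, hu, huniq⟩ := hE.2.2.2.1 ⟨n - 1, by omega⟩ (show n - 1 ≠ 0 by omega)
    have h2 := hE.1 hu
    simp only [stripEdges, Set.mem_setOf_eq] at h2
    have hval : (⟨n - 1, by omega⟩ : Fin n).val = n - 1 := rfl
    rcases h2 with h | h
    · -- n - 1 = u.val + 1, so u = ⟨n-2⟩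
      have hu2 : u = ⟨n - 2, by omega⟩ := Fin.ext (show u.val = n - 2 by omega)
      rw [hu2] at hu
      right
      refine ⟨hu, fun hcon => ?_⟩
      have h3 := huniq _ hcon
      rw [hu2] at h3
      have h4 : (n : ℕ) - 3 = n - 2 := congrArg Fin.val h3
      omega
    · have hu2 : u = ⟨n - 3, by omega⟩ := Fin.ext (show u.val = n - 3 by omega)
      rw [hu2] at hu
      left
      refine ⟨hu, fun hcon => ?_⟩
      have h3 := huniq _ hcon
      rw [hu2] at h3
      have h4 : (n : ℕ) - 2 = n - 3 := congrArg Fin.val h3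
      omega
  · exact StripTreeAux.strip_equiv hn ⟨n - 2, by omega⟩ (Or.inl rfl)
  · exact StripTreeAux.strip_equiv hn ⟨n - 3, by omega⟩ (Or.inr rfl)
end

section
/- Let n ≥ 5 be odd and 0 ≤ j ≤ n−1. The spanning subgraph of C_n² whose edge set is the set of all windows minus the single window f_j (i.e., S_{n,(n−1)/2,j}) is weakly connected, closed with respect to every triangle, and its underlying undirected graph is a path on n vertices; hence it has exactly n−1 edges. -/
open Relation Finset

def finZModEquiv (n : ℕ) [NeZero n] : Fin n ≃ ZMod n where
  toFun i := (i.val : ZMod n)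
  invFun a := ⟨a.val, a.val_lt⟩
  left_inv i := by ext; simp [ZMod.val_natCast_of_lt i.isLt]
  right_inv a := ZMod.natCast_rightInverse a

lemma finZModEquiv_apply (n : ℕ) [NeZero n] (i : Fin n) :
    finZModEquiv n i = (i.val : ZMod n) := rfl

lemma window_eq (n : ℕ) (t : ℤ) :
    window n t = ((t : ZMod n), (t : ZMod n) + 2) := by
  unfold window
  exact Prod.ext rfl (by push_cast; ring)

lemma frame_eq (n : ℕ) (t : ℤ) :
    frame n t = ((t : ZMod n), (t : ZMod n) + 1) := by
  unfold frame
  exact Prod.ext rfl (by push_cast; ring)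

lemma windowsSet_eq (n : ℕ) :
    windowsSet n = (fun a : ZMod n => (a, a + 2)) '' Set.univ := by
  ext p
  constructor
  · rintro ⟨i, rfl⟩
    exact ⟨(i : ZMod n), trivial, (window_eq n i).symm⟩
  · rintro ⟨a, -, rfl⟩
    refine ⟨(ZMod.cast a : ℤ), ?_⟩
    rw [window_eq, ZMod.intCast_zmod_cast]

lemma mem_windowsSet_iff (n : ℕ) (a b : ZMod n) :
    (a, b) ∈ windowsSet n ↔ b = a + 2 := by
  rw [windowsSet_eq]
  constructor
  · rintro ⟨x, -, h⟩
    obtain ⟨rfl, rfl⟩ := Prod.mk.injEq .. ▸ h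
    rfl
  · rintro rfl
    exact ⟨a, trivial, rfl⟩

lemma mem_E_iff (n : ℕ) (j : ℤ) (a b : ZMod n) :
    (a, b) ∈ windowsSet n \ {window n j} ↔ b = a + 2 ∧ a ≠ (j : ZMod n) := by
  rw [Set.mem_diff, mem_windowsSet_iff, Set.mem_singleton_iff, window_eq]
  constructor
  · rintro ⟨rfl, h2⟩
    exact ⟨rfl, fun h => h2 (by rw [h])⟩
  · rintro ⟨rfl, h2⟩
    exact ⟨rfl, fun h => h2 (congrArg Prod.fst h)⟩

theorem windows_minus_one (n : ℕ) (hn : 5 ≤ n) (ho : Odd n) (j : ℕ) (hj : j ≤ n - 1) :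
    weaklyConnected (windowsSet n \ {window n (j : ℤ)}) ∧
    IsClosedSub n (windowsSet n \ {window n (j : ℤ)}) ∧
    (∃ σ : Fin n ≃ ZMod n, ∀ a b : ZMod n,
        ((a, b) ∈ windowsSet n \ {window n (j : ℤ)} ∨
            (b, a) ∈ windowsSet n \ {window n (j : ℤ)}) ↔
          ∃ i i' : Fin n, a = σ i ∧ b = σ i' ∧
            (i.val + 1 = i'.val ∨ i'.val + 1 = i.val)) ∧
    (windowsSet n \ {window n (j : ℤ)}).ncard = n - 1 := by
  haveI : NeZero n := ⟨by omega⟩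
  set jz : ZMod n := ((j : ℤ) : ZMod n) with hjz
  have hone : (1 : ZMod n) ≠ 0 := by
    haveI : Fact (1 < n) := ⟨by omega⟩
    exact one_ne_zero
  have memE : ∀ a b : ZMod n,
      (a, b) ∈ windowsSet n \ {window n (j : ℤ)} ↔ b = a + 2 ∧ a ≠ jz :=
    fun a b => mem_E_iff n j a b
  -- the bijection σ
  have hcop : Nat.Coprime 2 n := Nat.coprime_two_left.mpr ho
  set u2 : (ZMod n)ˣ := ZMod.unitOfCoprime 2 hcop with hu2
  set σ : Fin n ≃ ZMod n :=
    (finZModEquiv n).trans ((Units.mulLeft u2).trans (Equiv.addLeft (jz + 2))) with hσdef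
  have hσ : ∀ i : Fin n, σ i = jz + 2 + 2 * (i.val : ZMod n) := by
    intro i
    have h2 : (u2 : ZMod n) = 2 := by
      rw [hu2, ZMod.coe_unitOfCoprime]; norm_num
    simp only [hσdef, Equiv.trans_apply, finZModEquiv_apply, Units.mulLeft_apply, h2,
      Equiv.coe_addLeft]
  have hn1 : n - 1 < n := by omega
  have hlast : σ ⟨n - 1, hn1⟩ = jz := by
    rw [hσ]
    have hc : ((n - 1 : ℕ) : ZMod n) = -1 := by
      have : ((n - 1 : ℕ) : ZMod n) = (n : ZMod n) - 1 := by
        push_cast [Nat.cast_sub (by omega : 1 ≤ n)]; ring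
      rw [this, ZMod.natCast_self]; ring
    rw [hc]; ring
  have hne_last : ∀ i : Fin n, i.val < n - 1 → σ i ≠ jz := by
    intro i hi h
    have h2 := σ.injective (h.trans hlast.symm)
    have h3 : i.val = n - 1 := congrArg Fin.val h2
    omega
  have hsucc : ∀ (i : Fin n) (h1 : i.val + 1 < n), σ ⟨i.val + 1, h1⟩ = σ i + 2 := by
    intro i h1
    rw [hσ, hσ]
    push_cast
    ring
  have edge : ∀ (i : Fin n) (h1 : i.val + 1 < n),
      (σ i, σ ⟨i.val + 1, h1⟩) ∈ windowsSet n \ {window n (j : ℤ)} := by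
    intro i h1
    rw [memE]
    exact ⟨hsucc i h1, hne_last i (by omega)⟩
  set R : ZMod n → ZMod n → Prop := fun a b =>
    (a, b) ∈ windowsSet n \ {window n (j : ℤ)} ∨
    (b, a) ∈ windowsSet n \ {window n (j : ℤ)} with hR
  have hsym : Symmetric R := fun a b h => h.symm
  have reach : ∀ m : ℕ, ∀ h : m < n,
      Relation.ReflTransGen R (σ ⟨0, by omega⟩) (σ ⟨m, h⟩) := by
    intro m
    induction m with
    | zero => intro h; exact Relation.ReflTransGen.refl
    | succ k ih =>
      intro h
      exact (ih (by omega)).tail (Or.inl (edge ⟨k, by omega⟩ h))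
  have reachAll : ∀ a : ZMod n, Relation.ReflTransGen R (σ ⟨0, by omega⟩) a := by
    intro a
    have h := reach (σ.symm a).val (σ.symm a).isLt
    rwa [Fin.eta, Equiv.apply_symm_apply] at h
  refine ⟨?_, ?_, ⟨σ, ?_⟩, ?_⟩
  · intro u v
    exact ((@Relation.ReflTransGen.symmetric _ R ⟨fun a b h => hsym h⟩).symm _ _ (reachAll u)).trans (reachAll v)
  · intro i
    left
    have hframe : ∀ t : ℤ, frame n t ∉ windowsSet n \ {window n (j : ℤ)} := by
      intro t ht
      rw [frame_eq] at ht
      rw [memE] at ht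
      have h12 := add_left_cancel ht.1
      exact hone (by linear_combination -h12)
    have key : ∀ z, z ∈ triangleEdges n i ∩ (windowsSet n \ {window n (j : ℤ)}) →
        z = window n i := by
      rintro z ⟨hz1, hz2⟩
      rcases hz1 with h | h | h
      · exact absurd (h ▸ hz2) (hframe i)
      · exact absurd (h ▸ hz2) (hframe (i + 1))
      · exact h
    intro x hx y hy
    rw [key x hx, key y hy]
  · intro a b
    constructor
    · rintro (hab | hba)
      · rw [memE] at hab
        obtain ⟨hb, ha⟩ := hab
        have hai : a = σ (σ.symm a) := (σ.apply_symm_apply a).symm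
        have hilt : (σ.symm a).val < n - 1 := by
          by_contra hc
          have h3 : (σ.symm a).val = n - 1 := by
            have := (σ.symm a).isLt; omega
          exact ha (by rw [hai, show σ.symm a = ⟨n - 1, hn1⟩ from Fin.ext h3, hlast])
        refine ⟨σ.symm a, ⟨(σ.symm a).val + 1, by omega⟩, hai, ?_, Or.inl rfl⟩
        rw [hsucc (σ.symm a) (by omega), ← hai]
        exact hb
      · rw [memE] at hba
        obtain ⟨hb, ha⟩ := hba
        have hai : b = σ (σ.symm b) := (σ.apply_symm_apply b).symm
        have hilt : (σ.symm b).val < n - 1 := by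
          by_contra hc
          have h3 : (σ.symm b).val = n - 1 := by
            have := (σ.symm b).isLt; omega
          exact ha (by rw [hai, show σ.symm b = ⟨n - 1, hn1⟩ from Fin.ext h3, hlast])
        refine ⟨⟨(σ.symm b).val + 1, by omega⟩, σ.symm b, ?_, hai, Or.inr rfl⟩
        rw [hsucc (σ.symm b) (by omega), ← hai]
        exact hb
    · rintro ⟨i, i', rfl, rfl, h | h⟩
      · left
        rw [memE]
        have hlt : i.val + 1 < n := by rw [h]; exact i'.isLt
        have hi' : i' = ⟨i.val + 1, hlt⟩ := Fin.ext h.symm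
        refine ⟨by rw [hi', hsucc i hlt], hne_last i ?_⟩
        have := i'.isLt; omega
      · right
        rw [memE]
        have hlt : i'.val + 1 < n := by rw [h]; exact i.isLt
        have hi : i = ⟨i'.val + 1, hlt⟩ := Fin.ext h.symm
        refine ⟨by rw [hi, hsucc i' hlt], hne_last i' ?_⟩
        have := i.isLt; omega
  · have hWin : Function.Injective (fun a : ZMod n => (a, a + 2)) :=
      fun x y h => congrArg Prod.fst h
    have h1 : (windowsSet n).ncard = n := by
      rw [windowsSet_eq n, Set.ncard_image_of_injective _ hWin, Set.ncard_univ,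
        Nat.card_zmod]
    rw [Set.ncard_diff_singleton_of_mem (show window n (j : ℤ) ∈ windowsSet n from ⟨(j : ℤ), rfl⟩), h1]
end
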